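/- arXiv:1710.05797 — 2 statements merged into one kernel-verified Lean document; each statement's English description precedes it below -/
import Mathlib

section
/- The rotational shape function Ny1 satisfies the Kronecker delta property: Ny1(Pj) = 0 for j = 1,2,3; ∂Ny1/∂y(Pj) = 0 for j = 1,2,3; ∂Ny1/∂x(P1) = -1; and ∂Ny1/∂x(P2) = ∂Ny1/∂x(P3) = 0. -/
noncomputable section

/-- Area coordinate `L1(x,y) = 1 - x/a - y/b`. -/
def L1 (a b : ℝ) (x y : ℝ) : ℝ := 1 - x / a - y / b

/-- Area coordinate `L2(x,y) = x/a - (1/h - 1/b)·y`. -/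
def L2 (a h b : ℝ) (x y : ℝ) : ℝ := x / a - (1 / h - 1 / b) * y

/-- Area coordinate `L3(x,y) = y/h`. -/
def L3 (h : ℝ) (x y : ℝ) : ℝ := y / h

/-- Rotational shape function
`Ny1 = -a·(L1²L2 + ½L1L2L3) - a·(1 - h/b)·(L1²L3 + ½L1L2L3)`. -/
def Ny1 (a h b : ℝ) (x y : ℝ) : ℝ :=
  -a * ((L1 a b x y) ^ 2 * L2 a h b x y + (1 / 2) * L1 a b x y * L2 a h b x y * L3 h x y)
    - a * (1 - h / b) *
      ((L1 a b x y) ^ 2 * L3 h x y + (1 / 2) * L1 a b x y * L2 a h b x y * L3 h x y)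

/-- Partial derivative in the first variable. -/
def pdx (f : ℝ → ℝ → ℝ) (x y : ℝ) : ℝ := deriv (fun t => f t y) x

/-- Partial derivative in the second variable. -/
def pdy (f : ℝ → ℝ → ℝ) (x y : ℝ) : ℝ := deriv (fun t => f x t) y

/-
Every area coordinate is affine and `Lᵢ(Pⱼ) = δᵢⱼ`. As a cubic in `(L1, L2, L3)` every monomial
of `Ny1` contains `L1` and one of `L2`, `L3`, so `Ny1` and its gradient vanish wherever `L1 = 0`
and `L2 L3 = 0`, i.e. at `P2` and `P3`. At `P1`, where `(L1, L2, L3) = (1, 0, 0)`, only the linear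
part `-c3 L2 + c2 L3` survives in the derivative, which gives `-1` in `x` and `0` in `y`.
-/

def rotCubic (c₂ c₃ l₁ l₂ l₃ : ℝ) : ℝ :=
  -c₃ * (l₁ ^ 2 * l₂ + 1 / 2 * l₁ * l₂ * l₃) + c₂ * (l₁ ^ 2 * l₃ + 1 / 2 * l₁ * l₂ * l₃)

section rotCubic

variable {c₂ c₃ : ℝ}

theorem rotCubic_zero_left (l₂ l₃ : ℝ) : rotCubic c₂ c₃ 0 l₂ l₃ = 0 := by
  simp [rotCubic]

theorem rotCubic_zero_zero (l₁ : ℝ) : rotCubic c₂ c₃ l₁ 0 0 = 0 := by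
  simp [rotCubic]

variable {f₁ f₂ f₃ : ℝ → ℝ} {d₁ d₂ d₃ t : ℝ}

theorem hasDerivAt_rotCubic (hf₁ : HasDerivAt f₁ d₁ t) (hf₂ : HasDerivAt f₂ d₂ t)
    (hf₃ : HasDerivAt f₃ d₃ t) :
    HasDerivAt (fun s => rotCubic c₂ c₃ (f₁ s) (f₂ s) (f₃ s))
      (-c₃ * (2 * f₁ t * d₁ * f₂ t + f₁ t ^ 2 * d₂
          + 1 / 2 * (d₁ * f₂ t * f₃ t + f₁ t * d₂ * f₃ t + f₁ t * f₂ t * d₃))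
        + c₂ * (2 * f₁ t * d₁ * f₃ t + f₁ t ^ 2 * d₃
          + 1 / 2 * (d₁ * f₂ t * f₃ t + f₁ t * d₂ * f₃ t + f₁ t * f₂ t * d₃))) t := by
  have hmixed := ((hf₁.const_mul (1 / 2 : ℝ)).fun_mul hf₂).fun_mul hf₃
  refine ((((hf₁.fun_pow 2).fun_mul hf₂).fun_add hmixed).const_mul (-c₃)).fun_add
    ((((hf₁.fun_pow 2).fun_mul hf₃).fun_add hmixed).const_mul c₂) |>.congr_deriv ?_
  norm_num; ring

theorem hasDerivAt_rotCubic_of_eq_one_zero_zero (hf₁ : HasDerivAt f₁ d₁ t)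
    (hf₂ : HasDerivAt f₂ d₂ t) (hf₃ : HasDerivAt f₃ d₃ t)
    (h₁ : f₁ t = 1) (h₂ : f₂ t = 0) (h₃ : f₃ t = 0) :
    HasDerivAt (fun s => rotCubic c₂ c₃ (f₁ s) (f₂ s) (f₃ s)) (-c₃ * d₂ + c₂ * d₃) t := by
  convert hasDerivAt_rotCubic hf₁ hf₂ hf₃ using 1
  rw [h₁, h₂, h₃]; ring

theorem hasDerivAt_rotCubic_of_eq_zero (hf₁ : HasDerivAt f₁ d₁ t)
    (hf₂ : HasDerivAt f₂ d₂ t) (hf₃ : HasDerivAt f₃ d₃ t)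
    (h₁ : f₁ t = 0) (h₂₃ : f₂ t * f₃ t = 0) :
    HasDerivAt (fun s => rotCubic c₂ c₃ (f₁ s) (f₂ s) (f₃ s)) 0 t := by
  convert hasDerivAt_rotCubic hf₁ hf₂ hf₃ using 1
  rw [h₁]; linear_combination (c₃ - c₂) / 2 * d₁ * h₂₃

end rotCubic

section AreaCoordinates

variable (a h b : ℝ) {x y : ℝ}

theorem Ny1_eq_rotCubic (x y : ℝ) :
    Ny1 a h b x y = rotCubic (-(a * (1 - h / b))) a (L1 a b x y) (L2 a h b x y) (L3 h x y) := by
  simp only [Ny1, rotCubic]; ring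

theorem hasDerivAt_L1_left : HasDerivAt (L1 a b · y) (-(1 / a)) x := by
  simpa [L1] using (((hasDerivAt_id x).div_const a).const_sub 1).sub_const (y / b)

theorem hasDerivAt_L2_left : HasDerivAt (L2 a h b · y) (1 / a) x := by
  simpa [L2] using ((hasDerivAt_id x).div_const a).sub_const ((1 / h - 1 / b) * y)

theorem hasDerivAt_L3_left : HasDerivAt (L3 h · y) 0 x :=
  hasDerivAt_const x (y / h)

theorem hasDerivAt_L1_right : HasDerivAt (L1 a b x ·) (-(1 / b)) y := by
  simpa [L1] using ((hasDerivAt_id y).div_const b).const_sub (1 - x / a)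

theorem hasDerivAt_L2_right : HasDerivAt (L2 a h b x ·) (-(1 / h - 1 / b)) y := by
  simpa [L2] using ((hasDerivAt_id y).const_mul (1 / h - 1 / b)).const_sub (x / a)

theorem hasDerivAt_L3_right : HasDerivAt (L3 h x ·) (1 / h) y := by
  simpa [L3] using (hasDerivAt_id y).div_const h

variable {a h b}

theorem pdx_Ny1_of_eq_one_zero_zero (ha : a ≠ 0) (h₁ : L1 a b x y = 1) (h₂ : L2 a h b x y = 0)
    (h₃ : L3 h x y = 0) : pdx (Ny1 a h b) x y = -1 := by
  simp only [pdx, Ny1_eq_rotCubic]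
  rw [(hasDerivAt_rotCubic_of_eq_one_zero_zero (hasDerivAt_L1_left a b) (hasDerivAt_L2_left a h b)
    (hasDerivAt_L3_left h) h₁ h₂ h₃).deriv]
  field_simp; ring

theorem pdy_Ny1_of_eq_one_zero_zero (hh : h ≠ 0) (h₁ : L1 a b x y = 1) (h₂ : L2 a h b x y = 0)
    (h₃ : L3 h x y = 0) : pdy (Ny1 a h b) x y = 0 := by
  simp only [pdy, Ny1_eq_rotCubic]
  rw [(hasDerivAt_rotCubic_of_eq_one_zero_zero (hasDerivAt_L1_right a b)
    (hasDerivAt_L2_right a h b) (hasDerivAt_L3_right h) h₁ h₂ h₃).deriv]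
  field_simp; ring

theorem pdx_Ny1_of_eq_zero (h₁ : L1 a b x y = 0) (h₂₃ : L2 a h b x y * L3 h x y = 0) :
    pdx (Ny1 a h b) x y = 0 := by
  simp only [pdx, Ny1_eq_rotCubic]
  exact (hasDerivAt_rotCubic_of_eq_zero (hasDerivAt_L1_left a b) (hasDerivAt_L2_left a h b)
    (hasDerivAt_L3_left h) h₁ h₂₃).deriv

theorem pdy_Ny1_of_eq_zero (h₁ : L1 a b x y = 0) (h₂₃ : L2 a h b x y * L3 h x y = 0) :
    pdy (Ny1 a h b) x y = 0 := by
  simp only [pdy, Ny1_eq_rotCubic]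
  exact (hasDerivAt_rotCubic_of_eq_zero (hasDerivAt_L1_right a b) (hasDerivAt_L2_right a h b)
    (hasDerivAt_L3_right h) h₁ h₂₃).deriv

theorem areaCoords_P1 : L1 a b 0 0 = 1 ∧ L2 a h b 0 0 = 0 ∧ L3 h 0 0 = 0 := by
  simp [L1, L2, L3]

theorem areaCoords_P2 (ha : a ≠ 0) : L1 a b a 0 = 0 ∧ L2 a h b a 0 = 1 ∧ L3 h a 0 = 0 := by
  simp [L1, L2, L3, ha]

theorem areaCoords_P3 (ha : a ≠ 0) (hh : h ≠ 0) :
    L1 a b (a * (1 - h / b)) h = 0 ∧ L2 a h b (a * (1 - h / b)) h = 0 ∧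
      L3 h (a * (1 - h / b)) h = 1 := by
  refine ⟨?_, ?_, div_self hh⟩
  · rw [L1, mul_div_cancel_left₀ _ ha]; ring
  · rw [L2, mul_div_cancel_left₀ _ ha, sub_mul, one_div_mul_cancel hh]; ring

end AreaCoordinates

theorem Ny1_kronecker_delta_general (a h b : ℝ) (ha : 0 < a) (hh : 0 < h) :
    (Ny1 a h b 0 0 = 0 ∧ Ny1 a h b a 0 = 0 ∧ Ny1 a h b (a * (1 - h / b)) h = 0) ∧
    (pdy (Ny1 a h b) 0 0 = 0 ∧ pdy (Ny1 a h b) a 0 = 0 ∧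
      pdy (Ny1 a h b) (a * (1 - h / b)) h = 0) ∧
    pdx (Ny1 a h b) 0 0 = -1 ∧ pdx (Ny1 a h b) a 0 = 0 ∧
      pdx (Ny1 a h b) (a * (1 - h / b)) h = 0 := by
  obtain ⟨h₁₁, h₂₁, h₃₁⟩ := areaCoords_P1 (a := a) (h := h) (b := b)
  obtain ⟨h₁₂, -, h₃₂⟩ := areaCoords_P2 (h := h) (b := b) ha.ne'
  obtain ⟨h₁₃, h₂₃, -⟩ := areaCoords_P3 (b := b) ha.ne' hh.ne'
  have h₂₃₂ : L2 a h b a 0 * L3 h a 0 = 0 := by rw [h₃₂, mul_zero]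
  have h₂₃₃ : L2 a h b (a * (1 - h / b)) h * L3 h (a * (1 - h / b)) h = 0 := by rw [h₂₃, zero_mul]
  refine ⟨⟨?_, ?_, ?_⟩, ⟨?_, ?_, ?_⟩, ?_, ?_, ?_⟩
  · rw [Ny1_eq_rotCubic, h₂₁, h₃₁, rotCubic_zero_zero]
  · rw [Ny1_eq_rotCubic, h₁₂, rotCubic_zero_left]
  · rw [Ny1_eq_rotCubic, h₁₃, rotCubic_zero_left]
  · exact pdy_Ny1_of_eq_one_zero_zero hh.ne' h₁₁ h₂₁ h₃₁
  · exact pdy_Ny1_of_eq_zero h₁₂ h₂₃₂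
  · exact pdy_Ny1_of_eq_zero h₁₃ h₂₃₃
  · exact pdx_Ny1_of_eq_one_zero_zero ha.ne' h₁₁ h₂₁ h₃₁
  · exact pdx_Ny1_of_eq_zero h₁₂ h₂₃₂
  · exact pdx_Ny1_of_eq_zero h₁₃ h₂₃₃

/-- Kronecker delta property of the rotational shape function `Ny1` at the nodes
`P1 = (0,0)`, `P2 = (a,0)`, `P3 = (a(1-h/b), h)`. -/
theorem Ny1_kronecker_delta (a h b : ℝ) (ha : 0 < a) (hh : 0 < h) (hb : h ≤ b) :
    (Ny1 a h b 0 0 = 0 ∧ Ny1 a h b a 0 = 0 ∧ Ny1 a h b (a * (1 - h / b)) h = 0) ∧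
    (pdy (Ny1 a h b) 0 0 = 0 ∧ pdy (Ny1 a h b) a 0 = 0 ∧
      pdy (Ny1 a h b) (a * (1 - h / b)) h = 0) ∧
    pdx (Ny1 a h b) 0 0 = -1 ∧ pdx (Ny1 a h b) a 0 = 0 ∧
      pdx (Ny1 a h b) (a * (1 - h / b)) h = 0 :=
  Ny1_kronecker_delta_general a h b ha hh
end
end

section
/- The basic full node shape function φ is supported in the open horizontal strip |y| < h: for every (x,y) ∈ ℝ² with |y| ≥ h, φ(x,y) = 0. -/
noncomputable section

/-- Linear functional `g1(x,y) = x/a + y/b`. -/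
def g1 (a b : ℝ) (p : ℝ × ℝ) : ℝ := p.1 / a + p.2 / b

/-- Linear functional `g2(x,y) = x/a - (1/h - 1/b)·y`. -/
def g2 (a h b : ℝ) (p : ℝ × ℝ) : ℝ := p.1 / a - (1 / h - 1 / b) * p.2

/-- Linear functional `g3(x,y) = y/h`. -/
def g3 (h : ℝ) (p : ℝ × ℝ) : ℝ := p.2 / h

/-- The cubic polynomial `F(u,v,w) = u + u²·(v + w) - u·(v² + w²)`. -/
def Fcube (u v w : ℝ) : ℝ := u + u ^ 2 * (v + w) - u * (v ^ 2 + w ^ 2)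

/-- The six subdomains `D1, …, D6` of the hexagon around the origin. -/
def Dom (a h b : ℝ) : Fin 6 → Set (ℝ × ℝ)
  | 0 => {p | 0 ≤ g2 a h b p ∧ 0 ≤ g3 h p ∧ g1 a b p ≤ 1}
  | 1 => {p | 0 ≤ g1 a b p ∧ g2 a h b p ≤ 0 ∧ g3 h p ≤ 1}
  | 2 => {p | g1 a b p ≤ 0 ∧ 0 ≤ g3 h p ∧ -1 ≤ g2 a h b p}
  | 3 => {p | g2 a h b p ≤ 0 ∧ g3 h p ≤ 0 ∧ -1 ≤ g1 a b p}
  | 4 => {p | g1 a b p ≤ 0 ∧ 0 ≤ g2 a h b p ∧ -1 ≤ g3 h p}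
  | 5 => {p | 0 ≤ g1 a b p ∧ g3 h p ≤ 0 ∧ g2 a h b p ≤ 1}

/-- The six polynomial pieces of the basic full node shape function. -/
def Fpiece (a h b : ℝ) : Fin 6 → ℝ × ℝ → ℝ
  | 0 => fun p => Fcube (1 - g1 a b p) (g2 a h b p) (g3 h p)
  | 1 => fun p => Fcube (1 - g3 h p) (g1 a b p) (-g2 a h b p)
  | 2 => fun p => Fcube (1 + g2 a h b p) (-g1 a b p) (g3 h p)
  | 3 => fun p => Fcube (1 + g1 a b p) (-g2 a h b p) (-g3 h p)
  | 4 => fun p => Fcube (1 + g3 h p) (-g1 a b p) (g2 a h b p)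
  | 5 => fun p => Fcube (1 - g2 a h b p) (g1 a b p) (-g3 h p)

open Classical in
/-- The basic full node shape function `φ`, defined piecewise on the hexagon
`D1 ∪ … ∪ D6` and zero outside. -/
def phi (a h b : ℝ) (p : ℝ × ℝ) : ℝ :=
  if p ∈ Dom a h b 0 then Fpiece a h b 0 p
  else if p ∈ Dom a h b 1 then Fpiece a h b 1 p
  else if p ∈ Dom a h b 2 then Fpiece a h b 2 p
  else if p ∈ Dom a h b 3 then Fpiece a h b 3 p
  else if p ∈ Dom a h b 4 then Fpiece a h b 4 p
  else if p ∈ Dom a h b 5 then Fpiece a h b 5 p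
  else 0

/-! On each `Dᵢ` the function `φ` is `F(u, v, w)` with `u` an affine function vanishing on the
outer edge of the hexagon in `Dᵢ`, and `F(0, v, w) = 0`. Where `|y| ≥ h` we have `|g3| ≥ 1`, and
together with `g1 = g2 + g3` the inequalities defining any `Dᵢ` containing such a point force `u = 0`. -/

lemma Fcube_eq_zero_of_left_eq_zero {u : ℝ} (hu : u = 0) (v w : ℝ) : Fcube u v w = 0 := by
  simp [Fcube, hu]

lemma g1_eq_g2_add_g3 (a h b : ℝ) (p : ℝ × ℝ) : g1 a b p = g2 a h b p + g3 h p := by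
  simp only [g1, g2, g3]
  ring

lemma one_le_abs_g3 {h : ℝ} (hh : 0 < h) {p : ℝ × ℝ} (hp : h ≤ |p.2|) : 1 ≤ |g3 h p| := by
  rwa [g3, abs_div, abs_of_pos hh, one_le_div hh]

lemma Fpiece_eq_zero_of_one_le_abs_g3 (a h b : ℝ) (i : Fin 6) {p : ℝ × ℝ} (hpD : p ∈ Dom a h b i)
    (hp : 1 ≤ |g3 h p|) : Fpiece a h b i p = 0 := by
  have hsum := g1_eq_g2_add_g3 a h b p
  obtain hg3 | hg3 := le_abs'.mp hp <;>
  fin_cases i <;>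
  obtain ⟨h₁, h₂, h₃⟩ := hpD <;>
  exact Fcube_eq_zero_of_left_eq_zero (by linarith) _ _

lemma phi_eq_zero_of_Fpiece_eq_zero {a h b : ℝ} {p : ℝ × ℝ}
    (hp : ∀ i, p ∈ Dom a h b i → Fpiece a h b i p = 0) : phi a h b p = 0 := by
  unfold phi
  split_ifs with h₀ h₁ h₂ h₃ h₄ h₅
  exacts [hp 0 h₀, hp 1 h₁, hp 2 h₂, hp 3 h₃, hp 4 h₄, hp 5 h₅, rfl]

theorem phi_supported_in_strip_general (a h b : ℝ) (hh : 0 < h) :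
    ∀ x y : ℝ, h ≤ |y| → phi a h b (x, y) = 0 := by
  intro x y hy
  exact phi_eq_zero_of_Fpiece_eq_zero fun i hi =>
    Fpiece_eq_zero_of_one_le_abs_g3 a h b i hi (one_le_abs_g3 hh hy)

/-- `φ` is supported in the horizontal strip `|y| < h`. -/
theorem phi_supported_in_strip (a h b : ℝ) (ha : 0 < a) (hh : 0 < h) (hb : h ≤ b) :
    ∀ x y : ℝ, h ≤ |y| → phi a h b (x, y) = 0 :=
  phi_supported_in_strip_general a h b hh
end
end
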